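/- arXiv:0810.0352 — 5 statements merged into one kernel-verified Lean document; each statement's English description precedes it below -/
import Mathlib

section
/- Let n ≥ 3 and let S_n be the monoid presented by generators a_1, …, a_n and relations a_1 a_2 ⋯ a_n = a_{σ(1)} ⋯ a_{σ(n)} for σ in the cyclic group generated by the n-cycle. Every element a ∈ S_n can be written uniquely as a product a = a_1^i (a_1 a_2 ⋯ a_n)^ε (a_2 ⋯ a_n)^j b, where ε ∈ {0,1}, b ∈ S_n \ (a_1 S_n ∪ (a_2 ⋯ a_n) S_n), i, j are non-negative integers, and the condition holds that if j ≥ 1 then ε = 1 or i = 0. -/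
/-- The word `a_{σ(1)} a_{σ(2)} ⋯ a_{σ(n)}` in the free monoid on `n` generators. -/
def permWord (n : ℕ) (σ : Equiv.Perm (Fin n)) : FreeMonoid (Fin n) :=
  ((List.finRange n).map fun i => FreeMonoid.of (σ i)).prod

/-- The defining relations `a_1 a_2 ⋯ a_n = a_{σ(1)} a_{σ(2)} ⋯ a_{σ(n)}`, where `σ` runs
through the cyclic subgroup of `Sym_n` generated by the `n`-cycle `(1,2,…,n)` (i.e. `finRotate n`). -/
def cycRel (n : ℕ) : FreeMonoid (Fin n) → FreeMonoid (Fin n) → Prop :=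
  fun x y => x = permWord n 1 ∧ ∃ k : ℕ, y = permWord n (finRotate n ^ k)

/-- The monoid `S_n` presented by generators `a_1, …, a_n` and the above relations. -/
def Scyc (n : ℕ) : Type := (conGen (cycRel n)).Quotient

instance (n : ℕ) : Monoid (Scyc n) := Con.monoid _

/-- The generator `a_i` of `S_n`. -/
def agen {n : ℕ} (i : Fin n) : Scyc n := (conGen (cycRel n)).mk' (FreeMonoid.of i)

/-- The element `z = a_1 a_2 ⋯ a_n` of `S_n`. -/
def zc (n : ℕ) : Scyc n := ((List.finRange n).map agen).prod

/-!
In `S_n` every rotation of `a_1 ⋯ a_n` equals `z = a_1 ⋯ a_n`, and `z` is central. Deleting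
occurrences of rotations from words is a confluent rewriting system, because two overlapping
rotations delete to the same word; so two words are equal in `S_n` iff they have the same length
and the same reduced form, and every element is uniquely `z^m r` with `r` a reduced word. Since
`a_1 (a_2 ⋯ a_n)` and `(a_2 ⋯ a_n) a_1` are rotations, a reduced word is uniquely
`a_1^p (a_2 ⋯ a_n)^q v` with `p = 0` or `q = 0` and `v` reduced with neither prefix. Finally
`a_1^(p+k) z (a_2 ⋯ a_n)^(k+q) = z^(k+1) a_1^p (a_2 ⋯ a_n)^q` translates `z^m a_1^p (a_2 ⋯ a_n)^q`
into the normal form.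
-/

lemma List.exists_eq_append_of_append_eq_append {α : Type*} {a b c d : List α}
    (h : a ++ b = c ++ d) (hl : a.length ≤ c.length) : ∃ e, c = a ++ e ∧ b = e ++ d := by
  obtain ⟨e, he⟩ := List.prefix_of_prefix_length_le (h ▸ List.prefix_append a b)
    (List.prefix_append c d) hl
  refine ⟨e, he.symm, List.append_cancel_left (as := a) ?_⟩
  rw [h, ← he, List.append_assoc]

lemma List.flatten_replicate_append_inj {α : Type*} {l x y : List α} {i j : ℕ}
    (hx : ¬ l <+: x) (hy : ¬ l <+: y)
    (h : (List.replicate i l).flatten ++ x = (List.replicate j l).flatten ++ y) :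
    i = j ∧ x = y := by
  induction i generalizing j with
  | zero =>
    cases j with
    | zero => simpa using h
    | succ j =>
      simp only [List.replicate_succ, List.flatten_cons, List.replicate_zero, List.flatten_nil,
        List.nil_append, List.append_assoc] at h
      exact absurd ⟨_, h.symm⟩ hx
  | succ i ih =>
    cases j with
    | zero =>
      simp only [List.replicate_succ, List.flatten_cons, List.replicate_zero, List.flatten_nil,
        List.nil_append, List.append_assoc] at h
      exact absurd ⟨_, h⟩ hy
    | succ j =>
      simp only [List.replicate_succ, List.flatten_cons, List.append_assoc,
        List.append_cancel_left_eq] at h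
      exact (ih h).imp_left (congrArg (· + 1))

namespace FactorDeletion

open Relation

variable {α : Type*} {W : Set (List α)} {n : ℕ} {u v : List α}

def Step (W : Set (List α)) (u v : List α) : Prop :=
  ∃ x y, ∃ w ∈ W, u = x ++ w ++ y ∧ v = x ++ y

def Reduced (W : Set (List α)) (u : List α) : Prop := ∀ v, ¬ Step W u v

/-- `eq_of_overlap` says that deleting either of two overlapping occurrences `e ++ f` and
`f ++ g` from `e ++ f ++ g` leaves the same word. -/
structure OverlapConfluent (W : Set (List α)) (n : ℕ) : Prop where
  length_eq : ∀ w ∈ W, w.length = n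
  eq_of_overlap : ∀ e f g, f ≠ [] → e ++ f ∈ W → f ++ g ∈ W → e = g

lemma Step.of_mem {w : List α} (hw : w ∈ W) : Step W w [] := ⟨[], [], w, hw, by simp, rfl⟩

lemma Step.append (h : Step W u v) (p q : List α) : Step W (p ++ u ++ q) (p ++ v ++ q) := by
  obtain ⟨x, y, w, hw, rfl, rfl⟩ := h
  exact ⟨p ++ x, y ++ q, w, hw, by simp, by simp⟩

lemma Step.length_eq (hW : OverlapConfluent W n) (h : Step W u v) :
    u.length = v.length + n := by
  obtain ⟨x, y, w, hw, rfl, rfl⟩ := h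
  simp only [List.length_append, hW.length_eq w hw]
  omega

lemma reflTransGen_append {u' v' : List α} (hu : ReflTransGen (Step W) u u')
    (hv : ReflTransGen (Step W) v v') : ReflTransGen (Step W) (u ++ v) (u' ++ v') :=
  (hu.lift (· ++ v) fun _ _ h ↦ by simpa using h.append [] v).trans
    (hv.lift (u' ++ ·) fun _ _ h ↦ by simpa using h.append u' [])

lemma reflTransGen_flatten_replicate_append {w : List α} (hw : w ∈ W) (m : ℕ) (u : List α) :
    ReflTransGen (Step W) ((List.replicate m w).flatten ++ u) u := by
  induction m with
  | zero => exact .refl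
  | succ m ih =>
    refine .head ⟨[], _, w, hw, ?_, rfl⟩ ih
    simp [List.replicate_succ]

lemma OverlapConfluent.length_le_of_reflTransGen (hW : OverlapConfluent W n)
    (h : ReflTransGen (Step W) u v) : v.length ≤ u.length := by
  induction h with
  | refl => rfl
  | tail _ hbc ih => have := hbc.length_eq hW; omega

lemma OverlapConfluent.eq_of_reflTransGen_of_length_eq (hW : OverlapConfluent W n) (hn : 0 < n)
    (h : ReflTransGen (Step W) u v) (hl : u.length = v.length) : u = v := by
  rcases h.cases_head with rfl | ⟨c, huc, hcv⟩
  · rfl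
  · have := huc.length_eq hW
    have := hW.length_le_of_reflTransGen hcv
    omega

lemma OverlapConfluent.diamond_of_le (hW : OverlapConfluent W n) {x₁ x₂ y₁ y₂ w₁ w₂ : List α}
    (hw₁ : w₁ ∈ W) (hw₂ : w₂ ∈ W) (hu : x₁ ++ w₁ ++ y₁ = x₂ ++ w₂ ++ y₂)
    (hx : x₁.length ≤ x₂.length) :
    ∃ d, ReflGen (Step W) (x₁ ++ y₁) d ∧ ReflGen (Step W) (x₂ ++ y₂) d := by
  simp only [List.append_assoc] at hu
  obtain ⟨e, rfl, he⟩ := List.exists_eq_append_of_append_eq_append hu hx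
  rcases le_or_gt w₁.length e.length with hle | hlt
  · obtain ⟨m, rfl, hm⟩ := List.exists_eq_append_of_append_eq_append he hle
    refine ⟨x₁ ++ m ++ y₂, .single ⟨x₁ ++ m, y₂, w₂, hw₂, by simp [hm], rfl⟩,
      .single ⟨x₁, m ++ y₂, w₁, hw₁, by simp, by simp⟩⟩
  · obtain ⟨f, rfl, hf⟩ :=
      List.exists_eq_append_of_append_eq_append he.symm hlt.le
    have hfw : f.length ≤ w₂.length := by
      rw [hW.length_eq _ hw₂, ← hW.length_eq _ hw₁, List.length_append]
      omega
    obtain ⟨g, rfl, rfl⟩ := List.exists_eq_append_of_append_eq_append hf.symm hfw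
    have hfne : f ≠ [] := by rintro rfl; simp at hlt
    obtain rfl := hW.eq_of_overlap e f g hfne hw₁ hw₂
    exact ⟨x₁ ++ e ++ y₂, by rw [List.append_assoc], .refl⟩

lemma OverlapConfluent.diamond (hW : OverlapConfluent W n) {b c : List α} (hb : Step W u b)
    (hc : Step W u c) : ∃ d, ReflGen (Step W) b d ∧ ReflGen (Step W) c d := by
  obtain ⟨x₁, y₁, w₁, hw₁, rfl, rfl⟩ := hb
  obtain ⟨x₂, y₂, w₂, hw₂, hu, rfl⟩ := hc
  rcases le_total x₁.length x₂.length with h | h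
  · exact hW.diamond_of_le hw₁ hw₂ hu h
  · obtain ⟨d, h₂, h₁⟩ := hW.diamond_of_le hw₂ hw₁ hu.symm h
    exact ⟨d, h₁, h₂⟩

lemma OverlapConfluent.equivalence_join (hW : OverlapConfluent W n) :
    Equivalence (Join (ReflTransGen (Step W))) :=
  equivalence_join_reflTransGen fun _ _ _ hb hc ↦
    (hW.diamond hb hc).imp fun _ h ↦ ⟨h.1, h.2.to_reflTransGen⟩

lemma OverlapConfluent.exists_reduced (hW : OverlapConfluent W n) (hn : 0 < n) (u : List α) :
    ∃ r, ReflTransGen (Step W) u r ∧ Reduced W r := by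
  induction h : u.length using Nat.strong_induction_on generalizing u with
  | _ k ih =>
  by_cases hu : Reduced W u
  · exact ⟨u, .refl, hu⟩
  · obtain ⟨v, huv⟩ : ∃ v, Step W u v := by simpa [Reduced] using hu
    obtain ⟨r, hvr, hr⟩ := ih v.length (by have := huv.length_eq hW; omega) v rfl
    exact ⟨r, .head huv hvr, hr⟩

lemma Reduced.eq_of_reflTransGen (hu : Reduced W u) (h : ReflTransGen (Step W) u v) : u = v := by
  rcases h.cases_head with rfl | ⟨c, huc, -⟩
  · rfl
  · exact absurd huc (hu c)

lemma Reduced.eq_of_join (hu : Reduced W u) (hv : Reduced W v)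
    (h : Join (ReflTransGen (Step W)) u v) : u = v := by
  obtain ⟨d, hud, hvd⟩ := h
  rw [hu.eq_of_reflTransGen hud, hv.eq_of_reflTransGen hvd]

lemma Reduced.infix {t : List α} (hu : Reduced W u) (ht : t <:+: u) : Reduced W t := by
  obtain ⟨p, q, rfl⟩ := ht
  exact fun v hv ↦ hu _ (hv.append p q)

lemma Reduced.append_left (hv : Reduced W v) {x : List α}
    (hx : ∀ s, s <:+ x → s ≠ [] → ∀ w ∈ W, ¬ w <+: s ++ v) : Reduced W (x ++ v) := by
  rintro _ ⟨x₁, y, w, hw, hxv, rfl⟩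
  rw [List.append_assoc] at hxv
  rcases le_total x.length x₁.length with hle | hle
  · obtain ⟨e, rfl, he⟩ := List.exists_eq_append_of_append_eq_append hxv hle
    exact hv _ ⟨e, y, w, hw, by simp [he], rfl⟩
  · obtain ⟨s, rfl, hs⟩ := List.exists_eq_append_of_append_eq_append hxv.symm hle
    refine hx s (List.suffix_append _ _) ?_ w hw ⟨y, hs⟩
    rintro rfl
    exact hv _ ⟨[], y, w, hw, by simpa using hs.symm, rfl⟩

def OverlapConfluent.con (hW : OverlapConfluent W n) : Con (FreeMonoid α) where
  r a b := a.toList.length = b.toList.length ∧ Join (ReflTransGen (Step W)) a.toList b.toList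
  iseqv :=
    ⟨fun _ ↦ ⟨rfl, hW.equivalence_join.refl _⟩,
      fun h ↦ ⟨h.1.symm, hW.equivalence_join.symm h.2⟩,
      fun h₁ h₂ ↦ ⟨h₁.1.trans h₂.1, hW.equivalence_join.trans h₁.2 h₂.2⟩⟩
  mul' := by
    rintro a b c d ⟨hab, e, hae, hbe⟩ ⟨hcd, f, hcf, hdf⟩
    simp only [FreeMonoid.toList_mul]
    exact ⟨by simp [hab, hcd], e ++ f, reflTransGen_append hae hcf, reflTransGen_append hbe hdf⟩

end FactorDeletion

namespace Scyc

open FactorDeletion Relation Fin.NatCast Fin.CommRing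

variable {n : ℕ}

def mk (u : List (Fin n)) : Scyc n := (conGen (cycRel n)).mk' (FreeMonoid.ofList u)

lemma mk_append (u v : List (Fin n)) : mk (u ++ v) = mk u * mk v := by
  rw [mk, FreeMonoid.ofList_append, map_mul]
  rfl

lemma mk_eq_mk_iff_conGen {u v : List (Fin n)} :
    mk u = mk v ↔ conGen (cycRel n) (FreeMonoid.ofList u) (FreeMonoid.ofList v) :=
  Con.eq _

lemma agen_eq_mk (i : Fin n) : agen i = mk [i] := rfl

lemma mk_surjective : Function.Surjective (mk (n := n)) := fun a ↦ by
  obtain ⟨f, rfl⟩ := Con.mk'_surjective a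
  exact ⟨f.toList, by rw [mk, FreeMonoid.ofList_toList]⟩

lemma mk_flatten_replicate (l : List (Fin n)) (m : ℕ) :
    mk (List.replicate m l).flatten = mk l ^ m := by
  induction m with
  | zero => rfl
  | succ m ih => rw [List.replicate_succ, List.flatten_cons, mk_append, ih, pow_succ']

lemma prod_map_agen (l : List (Fin n)) : (l.map agen).prod = mk l := by
  induction l with
  | nil => rfl
  | cons c l ih => rw [List.map_cons, List.prod_cons, ih, agen_eq_mk, ← mk_append]; rfl

def wWord (n : ℕ) : List (Fin n) := (List.finRange n).drop 1

@[simp] lemma length_wWord : (wWord n).length = n - 1 := by simp [wWord]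

variable [NeZero n]

/-- Letters are indexed from `0`: the letter `i : Fin n` stands for `a_{i+1}`, so this is the
rotation `a_{k+1} ⋯ a_n a_1 ⋯ a_k` of `a_1 ⋯ a_n`. -/
def rotWord (n : ℕ) [NeZero n] (k : Fin n) : List (Fin n) := (List.finRange n).map (· + k)

abbrev rotations (n : ℕ) [NeZero n] : Set (List (Fin n)) := Set.range (rotWord n)

@[simp] lemma length_rotWord (k : Fin n) : (rotWord n k).length = n := by simp [rotWord]

lemma getElem_rotWord (k : Fin n) (i : ℕ) (h : i < (rotWord n k).length) :
    (rotWord n k)[i] = (i : Fin n) + k := by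
  simp only [rotWord, List.getElem_map, List.getElem_finRange]
  congr 1
  ext
  simp [Fin.val_cast_of_lt (by simpa using h)]

lemma getElem_of_rotWord_eq_append {k : Fin n} {e f : List (Fin n)} (h : rotWord n k = e ++ f) :
    (∀ i (hi : i < e.length), e[i] = (i : Fin n) + k) ∧
      ∀ i (hi : i < f.length), f[i] = ((e.length + i : ℕ) : Fin n) + k := by
  have hl := congrArg List.length h
  simp only [List.length_append, length_rotWord] at hl
  refine ⟨fun i hi ↦ ?_, fun i hi ↦ ?_⟩
  · have := List.getElem_of_eq h (i := i) (by simp; omega)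
    rw [getElem_rotWord, List.getElem_append_left hi] at this
    exact this.symm
  · have := List.getElem_of_eq h (i := e.length + i) (by simp; omega)
    rw [getElem_rotWord, List.getElem_append_right (by omega)] at this
    simpa using this.symm

lemma overlapConfluent_rotations : OverlapConfluent (rotations n) n := by
  refine ⟨by rintro _ ⟨k, rfl⟩; simp, ?_⟩
  rintro e f g hf ⟨k, hk⟩ ⟨k', hk'⟩
  obtain ⟨he, hf₁⟩ := getElem_of_rotWord_eq_append hk
  obtain ⟨hf₂, hg⟩ := getElem_of_rotWord_eq_append hk'
  have hl := congrArg List.length hk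
  have hl' := congrArg List.length hk'
  simp only [List.length_append, length_rotWord] at hl hl'
  -- `f` forces `k' = k + |e|`, and `g` then repeats `e` shifted by `|e| + |f| = n ≡ 0`
  have hf0 : 0 < f.length := List.length_pos_iff.2 hf
  have hk'k : k' = (e.length : Fin n) + k := by
    simpa using (hf₂ 0 hf0).symm.trans (hf₁ 0 hf0)
  have hn : ((e.length : ℕ) : Fin n) + (f.length : ℕ) = 0 := by
    rw [← Nat.cast_add, ← hl, Fin.natCast_self]
  refine List.ext_getElem (by omega) fun i hie hig ↦ ?_
  rw [he i hie, hg i hig, hk'k]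
  push_cast
  linear_combination -hn

lemma finRotate_pow_apply (k : ℕ) (i : Fin n) : (finRotate n ^ k) i = i + k := by
  induction k with
  | zero => simp
  | succ k ih =>
    rw [pow_succ', Equiv.Perm.mul_apply, ih, finRotate_apply]
    push_cast
    ring

lemma toList_permWord_finRotate_pow (k : ℕ) :
    (permWord n (finRotate n ^ k)).toList = rotWord n k := by
  simp only [permWord, FreeMonoid.toList_prod, List.map_map, Function.comp_def,
    FreeMonoid.toList_of, finRotate_pow_apply, rotWord]
  rw [← List.flatMap_def, ← List.map_eq_flatMap]

lemma rotWord_zero : rotWord n 0 = List.finRange n := by simp [rotWord]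

lemma zc_eq_mk : zc n = mk (rotWord n 0) := by rw [zc, prod_map_agen, rotWord_zero]

lemma ofList_rotWord (k : Fin n) :
    FreeMonoid.ofList (rotWord n k) = permWord n (finRotate n ^ (k : ℕ)) := by
  conv_lhs => rw [← Fin.cast_val_eq_self k]
  rw [← toList_permWord_finRotate_pow, FreeMonoid.ofList_toList]

lemma mk_rotWord (k : Fin n) : mk (rotWord n k) = zc n := by
  rw [zc_eq_mk, mk_eq_mk_iff_conGen, ofList_rotWord, ofList_rotWord, Fin.val_zero, pow_zero]
  exact ConGen.Rel.symm (ConGen.Rel.of _ _ ⟨rfl, k, rfl⟩)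

lemma singleton_append_rotWord (k : Fin n) : [k] ++ rotWord n (k + 1) = rotWord n k ++ [k] := by
  refine List.ext_getElem (by simp) fun i h₁ h₂ ↦ ?_
  trans (i : Fin n) + k
  · rcases i with _ | i
    · simp
    · rw [List.getElem_append_right (by simp), getElem_rotWord]
      simp only [List.length_singleton, Nat.add_sub_cancel]
      push_cast
      ring
  · simp only [List.length_append, length_rotWord, List.length_singleton] at h₂
    rcases Nat.lt_or_ge i n with hi | hi
    · rw [List.getElem_append_left (by simpa using hi), getElem_rotWord]
    · obtain rfl : i = n := by omega
      simp

lemma commute_zc (a : Scyc n) : Commute (zc n) a := by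
  obtain ⟨u, rfl⟩ := mk_surjective a
  induction u with
  | nil => exact Commute.one_right _
  | cons c u ih =>
    rw [← List.singleton_append, mk_append]
    refine Commute.mul_right ?_ ih
    calc zc n * mk [c] = mk (rotWord n c ++ [c]) := by rw [mk_append, mk_rotWord]
      _ = mk [c] * zc n := by rw [← singleton_append_rotWord, mk_append, mk_rotWord]

lemma mk_of_step {u v : List (Fin n)} (h : Step (rotations n) u v) : mk u = zc n * mk v := by
  obtain ⟨x, y, _, ⟨k, rfl⟩, rfl, rfl⟩ := h
  rw [mk_append, mk_append, mk_append, mk_rotWord, ← (commute_zc (mk x)).eq, mul_assoc]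

lemma mk_of_reflTransGen {u v : List (Fin n)} (h : ReflTransGen (Step (rotations n)) u v) :
    ∃ m, mk u = zc n ^ m * mk v ∧ u.length = v.length + m * n := by
  induction h with
  | refl => exact ⟨0, by simp, by simp⟩
  | tail _ hbc ih =>
    obtain ⟨m, hm, hlm⟩ := ih
    refine ⟨m + 1, by rw [hm, mk_of_step hbc, pow_succ, mul_assoc], ?_⟩
    rw [hlm, hbc.length_eq overlapConfluent_rotations]
    ring

lemma mk_eq_mk_iff {u v : List (Fin n)} :
    mk u = mk v ↔ u.length = v.length ∧ Join (ReflTransGen (Step (rotations n))) u v := by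
  constructor
  · intro h
    have hle : conGen (cycRel n) ≤ overlapConfluent_rotations.con := by
      refine Con.conGen_le.2 ?_
      rintro _ _ ⟨rfl, k, rfl⟩
      rw [← pow_zero (finRotate n)]
      refine ⟨?_, [], ?_, ?_⟩
      · simp only [toList_permWord_finRotate_pow, length_rotWord]
      all_goals rw [toList_permWord_finRotate_pow]; exact .single (.of_mem ⟨_, rfl⟩)
    simpa [OverlapConfluent.con] using hle (mk_eq_mk_iff_conGen.1 h)
  · rintro ⟨hl, d, hud, hvd⟩
    obtain ⟨m, hm, hlm⟩ := mk_of_reflTransGen hud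
    obtain ⟨m', hm', hlm'⟩ := mk_of_reflTransGen hvd
    obtain rfl : m = m' := Nat.eq_of_mul_eq_mul_right n.pos_of_neZero (by omega)
    rw [hm, hm']

lemma eq_of_mk_eq {u v : List (Fin n)} (h : mk u = mk v) (hv : Reduced (rotations n) v) :
    u = v := by
  obtain ⟨hl, d, hud, hvd⟩ := mk_eq_mk_iff.1 h
  obtain rfl := hv.eq_of_reflTransGen hvd
  exact overlapConfluent_rotations.eq_of_reflTransGen_of_length_eq n.pos_of_neZero hud hl

lemma mk_dvd_mk_iff {g v : List (Fin n)} (hv : Reduced (rotations n) v) :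
    mk g ∣ mk v ↔ g <+: v := by
  constructor
  · rintro ⟨s, hs⟩
    obtain ⟨t, rfl⟩ := mk_surjective s
    exact ⟨t, eq_of_mk_eq (by rw [mk_append, hs]) hv⟩
  · rintro ⟨t, rfl⟩
    exact ⟨mk t, mk_append g t⟩

lemma exists_eq_zc_pow_mul_mk (a : Scyc n) :
    ∃ m r, Reduced (rotations n) r ∧ a = zc n ^ m * mk r := by
  obtain ⟨u, rfl⟩ := mk_surjective a
  obtain ⟨r, hur, hr⟩ := overlapConfluent_rotations.exists_reduced n.pos_of_neZero u
  obtain ⟨m, hm, -⟩ := mk_of_reflTransGen hur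
  exact ⟨m, r, hr, hm⟩

lemma zc_pow_mul_mk_inj {m m' : ℕ} {r r' : List (Fin n)} (hr : Reduced (rotations n) r)
    (hr' : Reduced (rotations n) r') (h : zc n ^ m * mk r = zc n ^ m' * mk r') :
    m = m' ∧ r = r' := by
  have hmk (m : ℕ) (r : List (Fin n)) :
      zc n ^ m * mk r = mk ((List.replicate m (rotWord n 0)).flatten ++ r) := by
    rw [mk_append, mk_flatten_replicate, mk_rotWord]
  have hjoin (m : ℕ) (r : List (Fin n)) :
      Join (ReflTransGen (Step (rotations n))) ((List.replicate m (rotWord n 0)).flatten ++ r) r :=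
    ⟨r, reflTransGen_flatten_replicate_append (W := rotations n) ⟨0, rfl⟩ m r, .refl⟩
  rw [hmk, hmk] at h
  obtain ⟨hl, hj⟩ := mk_eq_mk_iff.1 h
  have hE := overlapConfluent_rotations.equivalence_join (n := n)
  obtain rfl : r = r' := hr.eq_of_join hr' <|
    hE.trans (hE.symm (hjoin m r)) (hE.trans hj (hjoin m' r'))
  simp only [List.length_append, List.length_flatten, List.map_replicate, List.sum_replicate,
    length_rotWord, smul_eq_mul, add_left_inj] at hl
  exact ⟨Nat.eq_of_mul_eq_mul_right n.pos_of_neZero hl, rfl⟩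

lemma getElem_wWord (i : ℕ) (h : i < (wWord n).length) : (wWord n)[i] = ((i + 1 : ℕ) : Fin n) := by
  simp only [length_wWord] at h
  simp only [wWord, List.getElem_drop, List.getElem_finRange]
  ext
  simp only [Fin.val_cast, Fin.val_cast_of_lt (show i + 1 < n by omega)]
  omega

lemma wWord_eq_cons (hn : 2 ≤ n) : ∃ t, wWord n = 1 :: t := by
  obtain ⟨c, t, ht⟩ := List.exists_cons_of_length_pos (l := wWord n) (by simp; omega)
  refine ⟨t, ?_⟩
  have := getElem_wWord (n := n) 0 (by simp; omega)
  simp only [ht, List.getElem_cons_zero, zero_add, Nat.cast_one] at this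
  rw [ht, this]

lemma rotWord_eq_cons (k : Fin n) : ∃ t, rotWord n k = k :: t := by
  obtain ⟨c, t, ht⟩ :=
    List.exists_cons_of_length_pos (l := rotWord n k) (by simpa using n.pos_of_neZero)
  have := getElem_rotWord k 0 (by simpa using n.pos_of_neZero)
  simp only [ht, List.getElem_cons_zero, Nat.cast_zero, zero_add] at this
  exact ⟨t, by rw [ht, this]⟩

lemma rotWord_zero_eq_cons : rotWord n 0 = 0 :: wWord n := by
  obtain ⟨m, rfl⟩ : ∃ m, n = m + 1 := ⟨n - 1, (Nat.succ_pred_eq_of_pos n.pos_of_neZero).symm⟩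
  rw [rotWord_zero, wWord, List.finRange_succ]
  rfl

lemma rotWord_one : rotWord n 1 = wWord n ++ [0] := by
  have := singleton_append_rotWord (0 : Fin n)
  rw [zero_add, rotWord_zero_eq_cons] at this
  simpa using this

lemma not_zero_prefix_flatten_replicate_wWord_append (hn : 2 ≤ n) {v : List (Fin n)}
    (h0 : ¬ [0] <+: v) (q : ℕ) : ¬ [0] <+: (List.replicate q (wWord n)).flatten ++ v := by
  cases q with
  | zero => simpa using h0
  | succ q =>
    obtain ⟨t, ht⟩ := wWord_eq_cons hn
    simp only [ht, List.replicate_succ, List.flatten_cons, List.cons_append, List.append_assoc,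
      List.cons_prefix_cons, Fin.zero_eq_one_iff, List.nil_prefix, and_true]
    omega

lemma reduced_replicate_zero_append (hn : 2 ≤ n) {v : List (Fin n)}
    (hv : Reduced (rotations n) v) (hw : ¬ wWord n <+: v) (p : ℕ) :
    Reduced (rotations n) (List.replicate p 0 ++ v) := by
  induction p with
  | zero => simpa using hv
  | succ p ih =>
    rw [List.replicate_succ, List.cons_append, ← List.singleton_append]
    refine ih.append_left fun s hs hs₀ ↦ ?_
    obtain rfl : s = [0] := by
      rcases List.suffix_cons_iff.1 hs with h | h
      exacts [h, absurd (List.suffix_nil.1 h) hs₀]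
    -- an occurrence starting at the new letter `a_1` is `a_1 (a_2 ⋯ a_n)`
    rintro _ ⟨k, rfl⟩ hk
    obtain ⟨t, ht⟩ := rotWord_eq_cons k
    rw [ht, List.singleton_append, List.cons_prefix_cons] at hk
    obtain ⟨rfl, hwt⟩ := hk
    rw [rotWord_zero_eq_cons, List.cons.injEq] at ht
    obtain ⟨-, rfl⟩ := ht
    cases p with
    | zero => exact hw (by simpa using hwt)
    | succ p =>
      obtain ⟨t, ht⟩ := wWord_eq_cons hn
      simp only [ht, List.replicate_succ, List.cons_append, List.cons_prefix_cons,
        Fin.one_eq_zero_iff] at hwt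
      omega

lemma reduced_flatten_replicate_wWord_append (hn : 2 ≤ n) {v : List (Fin n)}
    (hv : Reduced (rotations n) v) (h0 : ¬ [0] <+: v) (q : ℕ) :
    Reduced (rotations n) ((List.replicate q (wWord n)).flatten ++ v) := by
  induction q with
  | zero => simpa using hv
  | succ q ih =>
    rw [List.replicate_succ, List.flatten_cons, List.append_assoc]
    refine ih.append_left fun s ⟨t, ht⟩ hs₀ ↦ ?_
    rintro _ ⟨k, rfl⟩ ⟨y, hy⟩
    -- an occurrence starting inside `a_2 ⋯ a_n` continues past `a_n` with `a_1`
    have hts := congrArg List.length ht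
    simp only [List.length_append, length_wWord] at hts
    have hs0 : 0 < s.length := List.length_pos_iff.2 hs₀
    obtain ⟨e, hk, hr⟩ := List.exists_eq_append_of_append_eq_append hy.symm (by simp; omega)
    have he0 : 0 < e.length := by
      have := congrArg List.length hk
      simp only [List.length_append, length_rotWord] at this
      omega
    obtain ⟨hs', he⟩ := getElem_of_rotWord_eq_append hk
    obtain ⟨c, e, rfl⟩ := List.exists_cons_of_length_pos he0
    have hsk : s[0] = ((t.length + 1 : ℕ) : Fin n) := by
      rw [← getElem_wWord t.length (by simp; omega)]
      simp [← ht]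
    have hc : c = 0 := by
      have h1 := he 0 (by simp)
      have h2 := hs' 0 hs0
      rw [List.getElem_cons_zero, Nat.add_zero] at h1
      rw [hsk, Nat.cast_zero, zero_add] at h2
      rw [h1, ← h2, ← Nat.cast_add, show s.length + (t.length + 1) = n by omega, Fin.natCast_self]
    exact not_zero_prefix_flatten_replicate_wWord_append hn h0 q ⟨e ++ y, by rw [hr, hc]; rfl⟩

/-- The words of the elements `b` of the normal form. -/
def IsRemainder (v : List (Fin n)) : Prop :=
  Reduced (rotations n) v ∧ ¬ [0] <+: v ∧ ¬ wWord n <+: v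

def nfWord (p q : ℕ) (v : List (Fin n)) : List (Fin n) :=
  List.replicate p 0 ++ ((List.replicate q (wWord n)).flatten ++ v)

lemma reduced_nfWord (hn : 2 ≤ n) {p q : ℕ} {v : List (Fin n)} (hpq : p = 0 ∨ q = 0)
    (hv : IsRemainder v) : Reduced (rotations n) (nfWord p q v) := by
  rcases hpq with rfl | rfl
  · simpa [nfWord] using reduced_flatten_replicate_wWord_append hn hv.1 hv.2.1 q
  · simpa [nfWord] using reduced_replicate_zero_append hn hv.1 hv.2.2 p

lemma nfWord_inj (hn : 2 ≤ n) {p q p' q' : ℕ} {v v' : List (Fin n)} (hv : IsRemainder v)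
    (hv' : IsRemainder v') (h : nfWord p q v = nfWord p' q' v') : p = p' ∧ q = q' ∧ v = v' := by
  obtain ⟨rfl, hqv⟩ := List.flatten_replicate_append_inj
    (not_zero_prefix_flatten_replicate_wWord_append hn hv.2.1 q)
    (not_zero_prefix_flatten_replicate_wWord_append hn hv'.2.1 q')
    (by simpa only [nfWord, List.flatten_replicate_singleton] using h)
  obtain ⟨rfl, rfl⟩ := List.flatten_replicate_append_inj hv.2.2 hv'.2.2 hqv
  exact ⟨rfl, rfl, rfl⟩

lemma exists_eq_nfWord (hn : 2 ≤ n) {r : List (Fin n)} (hr : Reduced (rotations n) r) :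
    ∃ p q v, (p = 0 ∨ q = 0) ∧ IsRemainder v ∧ r = nfWord p q v := by
  induction h : r.length using Nat.strong_induction_on generalizing r with
  | _ k ih =>
  subst h
  by_cases h0 : [0] <+: r
  · obtain ⟨t, rfl⟩ := h0
    obtain ⟨p, q, v, hpq, hv, rfl⟩ :=
      ih _ (by simp) (hr.infix (List.suffix_append _ _).isInfix) rfl
    obtain rfl : q = 0 := by
      rcases hpq with rfl | rfl
      · cases q with
        | zero => rfl
        | succ q => exact (hr _ ⟨[], (List.replicate q (wWord n)).flatten ++ v, _, ⟨0, rfl⟩,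
            by simp [nfWord, rotWord_zero_eq_cons, List.replicate_succ], rfl⟩).elim
      · rfl
    exact ⟨p + 1, 0, v, Or.inr rfl, hv, by simp [nfWord, List.replicate_succ]⟩
  by_cases hw : wWord n <+: r
  · obtain ⟨t, rfl⟩ := hw
    obtain ⟨p, q, v, hpq, hv, rfl⟩ :=
      ih _ (by simp; omega) (hr.infix (List.suffix_append _ _).isInfix) rfl
    obtain rfl : p = 0 := by
      rcases hpq with rfl | rfl
      · rfl
      · cases p with
        | zero => rfl
        | succ p => exact (hr _ ⟨[], List.replicate p 0 ++ v, _, ⟨1, rfl⟩,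
            by simp [nfWord, rotWord_one, List.replicate_succ], rfl⟩).elim
    exact ⟨0, q + 1, v, Or.inl rfl, hv, by simp [nfWord, List.replicate_succ]⟩
  exact ⟨0, 0, r, Or.inl rfl, ⟨hr, h0, hw⟩, by simp [nfWord]⟩

lemma mk_nfWord (p q : ℕ) (v : List (Fin n)) :
    mk (nfWord p q v) = mk [0] ^ p * mk (wWord n) ^ q * mk v := by
  rw [nfWord, mk_append, mk_append, ← List.flatten_replicate_singleton, mk_flatten_replicate,
    mk_flatten_replicate, mul_assoc]

lemma mk_zero_mul_mk_wWord : mk [0] * mk (wWord n) = zc n := by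
  rw [← mk_append, List.singleton_append, ← rotWord_zero_eq_cons, mk_rotWord]

lemma pow_mul_pow_eq_zc_pow (k : ℕ) : mk [0] ^ k * mk (wWord n) ^ k = zc n ^ k := by
  induction k with
  | zero => simp
  | succ k ih =>
    calc mk [0] ^ (k + 1) * mk (wWord n) ^ (k + 1)
        = mk [0] * (mk [0] ^ k * mk (wWord n) ^ k) * mk (wWord n) := by
          rw [pow_succ' (mk [0]), pow_succ (mk (wWord n))]
          simp only [mul_assoc]
      _ = zc n ^ (k + 1) := by
          rw [ih, ← ((commute_zc _).pow_left k).eq, mul_assoc, mk_zero_mul_mk_wWord, pow_succ]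

lemma zero_pow_add_mul_zc_mul_wWord_pow (p q k : ℕ) :
    mk [0] ^ (p + k) * zc n * mk (wWord n) ^ (k + q) =
      zc n ^ (k + 1) * mk [0] ^ p * mk (wWord n) ^ q := by
  calc mk [0] ^ (p + k) * zc n * mk (wWord n) ^ (k + q)
      = mk [0] ^ p * (zc n * (mk [0] ^ k * mk (wWord n) ^ k)) * mk (wWord n) ^ q := by
        rw [pow_add, pow_add, (commute_zc _).left_comm]
        simp only [mul_assoc]
    _ = zc n ^ (k + 1) * mk [0] ^ p * mk (wWord n) ^ q := by
        rw [pow_mul_pow_eq_zc_pow, ← pow_succ', ← (commute_zc _).pow_left _ |>.eq]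

lemma isRemainder_iff_not_dvd {v : List (Fin n)} (hv : Reduced (rotations n) v) :
    IsRemainder v ↔ ¬ mk [0] ∣ mk v ∧ ¬ mk (wWord n) ∣ mk v := by
  rw [IsRemainder, mk_dvd_mk_iff hv, mk_dvd_mk_iff hv]
  exact and_iff_right hv

lemma exists_isRemainder_eq {b : Scyc n} (hb : ¬ mk [0] ∣ b) (hbw : ¬ mk (wWord n) ∣ b) :
    ∃ v, IsRemainder v ∧ b = mk v := by
  obtain ⟨m, r, hr, rfl⟩ := exists_eq_zc_pow_mul_mk b
  cases m with
  | zero =>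
    rw [pow_zero, one_mul] at hb hbw ⊢
    exact ⟨r, (isRemainder_iff_not_dvd hr).2 ⟨hb, hbw⟩, rfl⟩
  | succ m =>
    refine absurd ⟨mk (wWord n) * (zc n ^ m * mk r), ?_⟩ hb
    rw [← mul_assoc, mk_zero_mul_mk_wWord, ← mul_assoc, ← pow_succ']

lemma exists_normalForm (hn : 2 ≤ n) (a : Scyc n) :
    ∃ i e j v, e ≤ 1 ∧ (1 ≤ j → e = 1 ∨ i = 0) ∧ IsRemainder v ∧
      a = mk [0] ^ i * zc n ^ e * mk (wWord n) ^ j * mk v := by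
  obtain ⟨m, r, hr, rfl⟩ := exists_eq_zc_pow_mul_mk a
  obtain ⟨p, q, v, hpq, hv, rfl⟩ := exists_eq_nfWord hn hr
  rw [mk_nfWord]
  cases m with
  | zero => exact ⟨p, 0, q, v, zero_le_one, by omega, hv, by simp⟩
  | succ k =>
    refine ⟨p + k, 1, k + q, v, le_rfl, fun _ ↦ Or.inl rfl, hv, ?_⟩
    rw [pow_one, zero_pow_add_mul_zc_mul_wWord_pow]
    simp only [mul_assoc]

lemma eq_zc_pow_mul_mk_nfWord {i e j : ℕ} (he : e ≤ 1) (hs : 1 ≤ j → e = 1 ∨ i = 0)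
    (v : List (Fin n)) :
    (i - e * min i j = 0 ∨ j - e * min i j = 0) ∧
      mk [0] ^ i * zc n ^ e * mk (wWord n) ^ j * mk v =
        zc n ^ (e * (min i j + 1)) * mk (nfWord (i - e * min i j) (j - e * min i j) v) := by
  rw [mk_nfWord]
  rcases Nat.le_one_iff_eq_zero_or_eq_one.1 he with rfl | rfl
  · refine ⟨by omega, by simp⟩
  · obtain ⟨k, p, q, rfl, rfl, hk⟩ : ∃ k p q, i = p + k ∧ j = k + q ∧ min i j = k :=
      ⟨min i j, i - min i j, j - min i j, by omega, by omega, rfl⟩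
    refine ⟨by omega, ?_⟩
    rw [hk, one_mul, one_mul, pow_one, zero_pow_add_mul_zc_mul_wWord_pow, Nat.add_sub_cancel,
      Nat.add_sub_cancel_left]
    simp only [mul_assoc]

lemma normalForm_unique (hn : 2 ≤ n) {i e j i' e' j' : ℕ} {b b' : Scyc n}
    (he : e ≤ 1) (he' : e' ≤ 1) (hs : 1 ≤ j → e = 1 ∨ i = 0) (hs' : 1 ≤ j' → e' = 1 ∨ i' = 0)
    (hb : ¬ mk [0] ∣ b) (hbw : ¬ mk (wWord n) ∣ b)
    (hb' : ¬ mk [0] ∣ b') (hbw' : ¬ mk (wWord n) ∣ b')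
    (h : mk [0] ^ i * zc n ^ e * mk (wWord n) ^ j * b =
      mk [0] ^ i' * zc n ^ e' * mk (wWord n) ^ j' * b') :
    i = i' ∧ e = e' ∧ j = j' ∧ b = b' := by
  obtain ⟨v, hv, rfl⟩ := exists_isRemainder_eq hb hbw
  obtain ⟨v', hv', rfl⟩ := exists_isRemainder_eq hb' hbw'
  obtain ⟨hpq, hc⟩ := eq_zc_pow_mul_mk_nfWord he hs v
  obtain ⟨hpq', hc'⟩ := eq_zc_pow_mul_mk_nfWord he' hs' v'
  rw [hc, hc'] at h
  obtain ⟨hm, h⟩ := zc_pow_mul_mk_inj (reduced_nfWord hn hpq hv) (reduced_nfWord hn hpq' hv') h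
  obtain ⟨hp, hq, rfl⟩ := nfWord_inj hn hv hv' h
  refine ⟨?_, ?_, ?_, rfl⟩ <;> interval_cases e <;> interval_cases e' <;> omega

end Scyc

open Scyc in
/-- normal form. Every element `a ∈ S_n` can be written uniquely as
`a = a_1^i (a_1 a_2 ⋯ a_n)^ε (a_2 ⋯ a_n)^j b` with `ε ∈ {0,1}`,
`b ∈ S_n \ (a_1 S_n ∪ (a_2⋯a_n) S_n)`, `i, j ≥ 0` and `(j ≥ 1 → ε = 1 ∨ i = 0)`.
Here the quadruple `p = (i, ε, j, b)`. -/
theorem normal_form (n : ℕ) (hn : 3 ≤ n) (a : Scyc n) :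
    ∃! p : ℕ × ℕ × ℕ × Scyc n,
      p.2.1 ≤ 1 ∧
      a = agen (⟨0, by omega⟩ : Fin n) ^ p.1 * zc n ^ p.2.1 *
            ((((List.finRange n).drop 1).map agen).prod) ^ p.2.2.1 * p.2.2.2 ∧
      (¬ ∃ s : Scyc n, p.2.2.2 = agen (⟨0, by omega⟩ : Fin n) * s) ∧
      (¬ ∃ s : Scyc n, p.2.2.2 = (((List.finRange n).drop 1).map agen).prod * s) ∧
      (1 ≤ p.2.2.1 → p.2.1 = 1 ∨ p.1 = 0) := by
  have : NeZero n := ⟨by omega⟩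
  simp only [prod_map_agen, agen_eq_mk]
  obtain ⟨i, e, j, v, he, hs, hv, rfl⟩ := exists_normalForm (by omega) a
  obtain ⟨hv₀, hvw⟩ := (isRemainder_iff_not_dvd hv.1).1 hv
  refine ⟨(i, e, j, mk v), ⟨he, rfl, hv₀, hvw, hs⟩, ?_⟩
  rintro ⟨i', e', j', b⟩ ⟨he', hab, hb₀, hbw, hs'⟩
  obtain ⟨rfl, rfl, rfl, rfl⟩ :=
    normalForm_unique (by omega) he' he hs' hs hb₀ hbw hv₀ hvw hab.symm
  rfl
end

section
/- Let n ≥ 3 and let G_n be the group presented by generators a_1, …, a_n and relations a_1 a_2 ⋯ a_n = a_{σ(1)} ⋯ a_{σ(n)} for all σ in the cyclic subgroup of Sym_n generated by the n-cycle (1,2,…,n). Then G_n is isomorphic to F × ℤ, where F is a free group of rank n−1. -/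
/-- The word `a_{σ(1)} a_{σ(2)} ⋯ a_{σ(n)}` in the free group on `n` generators. -/
def permGWord (n : ℕ) (σ : Equiv.Perm (Fin n)) : FreeGroup (Fin n) :=
  ((List.finRange n).map fun i => FreeGroup.of (σ i)).prod

/-- The relators `(a_1 ⋯ a_n)(a_{σ(1)} ⋯ a_{σ(n)})⁻¹`, where `σ` runs through the cyclic
subgroup of `Sym_n` generated by the `n`-cycle `(1,2,…,n)` (i.e. `finRotate n`). -/
def cycGRels (n : ℕ) : Set (FreeGroup (Fin n)) :=
  {w | ∃ k : ℕ, w = permGWord n 1 * (permGWord n (finRotate n ^ k))⁻¹}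

/-! The element `z = a_1 ⋯ a_n` equals each cyclic rotation `a_{k+1} ⋯ a_n a_1 ⋯ a_k`;
comparing the rotations by `k` and `k + 1` shows that `a_{k+1}` commutes with `z`, so `z` is
central. Hence `a_n = (a_1 ⋯ a_{n-1})⁻¹ z` is redundant and `G_n` is generated by the free
elements `a_1, …, a_{n-1}` together with the central element `z`: sending `a_i ↦ (x_i, 0)` for
`i < n` and `a_n ↦ ((x_1 ⋯ x_{n-1})⁻¹, 1)` gives the isomorphism with `F × ℤ`. -/

namespace List

theorem commute_prod_of_forall_prod_rotate_eq {M : Type*} [Monoid M] {l : List M}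
    (h : ∀ k, (l.rotate k).prod = l.prod) {x : M} (hx : x ∈ l) : Commute x l.prod := by
  obtain ⟨p, s, rfl⟩ := append_of_mem hx
  have h₁ : (x :: (s ++ p)).prod = (p ++ x :: s).prod := by
    simpa [rotate_append_length_eq] using h p.length
  have h₂ : (s ++ p ++ [x]).prod = (p ++ x :: s).prod := by
    simpa [← rotate_rotate, rotate_append_length_eq] using h (p.length + 1)
  calc x * (p ++ x :: s).prod = x * (s ++ p ++ [x]).prod := by rw [h₂]
    _ = (x :: (s ++ p)).prod * x := by simp [mul_assoc]
    _ = (p ++ x :: s).prod * x := by rw [h₁]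

theorem prod_rotate_eq_of_forall_commute {G : Type*} [Group G] {l : List G}
    (h : ∀ x ∈ l, Commute x l.prod) (k : ℕ) : (l.rotate k).prod = l.prod := by
  set j := k % l.length
  have hcomm : Commute (l.take j).prod l.prod :=
    Commute.list_prod_left _ _ fun x hx => h x (mem_of_mem_take hx)
  rw [rotate_eq_drop_append_take_mod, prod_append]
  calc (l.drop j).prod * (l.take j).prod
      = (l.take j).prod⁻¹ * ((l.take j).prod * (l.drop j).prod) * (l.take j).prod := by group
    _ = l.prod := by rw [prod_take_mul_prod_drop, mul_assoc, ← hcomm.eq, inv_mul_cancel_left]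

theorem forall_prod_rotate_eq_iff {G : Type*} [Group G] {l : List G} :
    (∀ k, (l.rotate k).prod = l.prod) ↔ ∀ x ∈ l, Commute x l.prod :=
  ⟨fun h _ => commute_prod_of_forall_prod_rotate_eq h, prod_rotate_eq_of_forall_commute⟩

theorem map_finRotate_pow_finRange (n k : ℕ) :
    (finRange n).map (finRotate n ^ k) = (finRange n).rotate k := by
  have hrot : (finRange n).map (finRotate n) = (finRange n).rotate 1 := by
    rcases n with _ | m
    · simp
    refine ext_getElem (by simp) fun i _ _ => ?_
    simp [getElem_rotate, Fin.ext_iff, Fin.val_add, Nat.add_mod]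
  induction k with
  | zero => simp
  | succ k ih =>
    rw [pow_succ, Equiv.Perm.coe_mul, ← map_map, hrot, map_rotate, ih, rotate_rotate]

end List

open List

section Relations

variable {n : ℕ} {H : Type*} [Group H]

theorem map_permGWord (f : FreeGroup (Fin n) →* H) (σ : Equiv.Perm (Fin n)) :
    f (permGWord n σ) = (((finRange n).map σ).map (f ∘ FreeGroup.of)).prod := by
  rw [permGWord, map_list_prod, map_map, map_map]
  rfl

theorem map_permGWord_one_succ {m : ℕ} (f : FreeGroup (Fin (m + 1)) →* H) :
    f (permGWord (m + 1) 1) =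
      ((finRange m).map fun i => f (.of i.castSucc)).prod * f (.of (Fin.last m)) := by
  simp [map_permGWord, finRange_succ_last, Function.comp_def]

theorem map_eq_one_of_mem_cycGRels_iff (f : FreeGroup (Fin n) →* H) :
    (∀ r ∈ cycGRels n, f r = 1) ↔ ∀ i, Commute (f (.of i)) (f (permGWord n 1)) := by
  have hword : ∀ k, f (permGWord n (finRotate n ^ k)) =
      (((finRange n).map (f ∘ FreeGroup.of)).rotate k).prod := fun k => by
    rw [map_permGWord, map_finRotate_pow_finRange, map_rotate]
  have hone : f (permGWord n 1) = ((finRange n).map (f ∘ FreeGroup.of)).prod := by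
    simpa using hword 0
  simp only [cycGRels, Set.mem_ofPred_eq, forall_exists_index, forall_eq_apply_imp_iff, map_mul,
    map_inv, mul_inv_eq_one, hword, hone, eq_comm (a := (finRange n).map _ |>.prod)]
  simp [forall_prod_rotate_eq_iff]

end Relations

noncomputable def cycGCentral (n : ℕ) : PresentedGroup (cycGRels n) :=
  PresentedGroup.mk _ (permGWord n 1)

theorem cycGCentral_succ (m : ℕ) : cycGCentral (m + 1) =
    ((finRange m).map fun i => .of i.castSucc).prod * .of (Fin.last m) :=
  map_permGWord_one_succ _

theorem commute_cycGCentral {n : ℕ} (g : PresentedGroup (cycGRels n)) :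
    Commute g (cycGCentral n) := by
  have hgen := (map_eq_one_of_mem_cycGRels_iff (PresentedGroup.mk (cycGRels n))).mp
    fun _ => PresentedGroup.one_of_mem
  exact Subgroup.mem_centralizer_singleton_iff.mp <| PresentedGroup.generated_by _ _
    (fun i => Subgroup.mem_centralizer_singleton_iff.mpr (hgen i).eq) g

section Isomorphism

variable (m : ℕ)

local notation "G" => PresentedGroup (cycGRels (m + 1))
local notation "F" => FreeGroup (Fin m)

noncomputable def genImage : Fin (m + 1) → F × Multiplicative ℤ :=
  Fin.lastCases (((finRange m).map FreeGroup.of).prod⁻¹, .ofAdd 1) fun i => (.of i, 1)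

theorem lift_genImage_permGWord_one :
    FreeGroup.lift (genImage m) (permGWord (m + 1) 1) = (1, .ofAdd 1) := by
  have hinl : ((finRange m).map fun i => ((.of i : F), (1 : Multiplicative ℤ))).prod =
      (((finRange m).map FreeGroup.of).prod, 1) := by
    simpa [map_map, Function.comp_def] using
      (map_list_prod (MonoidHom.inl F (Multiplicative ℤ)) ((finRange m).map .of)).symm
  simp [map_permGWord_one_succ, genImage, hinl]

noncomputable def toFreeProdInt : G →* F × Multiplicative ℤ :=
  PresentedGroup.toGroup <| (map_eq_one_of_mem_cycGRels_iff _).mpr fun i => by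
    rw [lift_genImage_permGWord_one]
    exact .prod (.one_right _) (.all _ _)

noncomputable def ofFreeProdInt : F × Multiplicative ℤ →* G :=
  (FreeGroup.lift fun i => .of i.castSucc).noncommCoprod
    (zpowersHom G (cycGCentral (m + 1)))
    fun _ _ => (commute_cycGCentral _).zpow_right _

theorem ofFreeProdInt_apply (x : F) (y : Multiplicative ℤ) :
    ofFreeProdInt m (x, y) =
      FreeGroup.lift (fun i => .of i.castSucc) x * cycGCentral (m + 1) ^ y.toAdd :=
  rfl

theorem toFreeProdInt_comp_ofFreeProdInt :
    (toFreeProdInt m).comp (ofFreeProdInt m) = .id _ := by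
  have hF : ∀ x, toFreeProdInt m (FreeGroup.lift (fun i => .of i.castSucc) x) = (x, 1) :=
    DFunLike.congr_fun <| FreeGroup.ext_hom ((toFreeProdInt m).comp _) (.inl _ _) fun i => by
      simp [toFreeProdInt, genImage]
  have hz : toFreeProdInt m (cycGCentral (m + 1)) = (1, .ofAdd 1) :=
    lift_genImage_permGWord_one m
  refine MonoidHom.ext fun ⟨x, y⟩ => ?_
  calc toFreeProdInt m (ofFreeProdInt m (x, y))
      = toFreeProdInt m (FreeGroup.lift (fun i => .of i.castSucc) x) *
          toFreeProdInt m (cycGCentral (m + 1)) ^ y.toAdd := by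
        rw [ofFreeProdInt_apply, map_mul, map_zpow]
    _ = (x, 1) * (1, .ofAdd 1) ^ y.toAdd := by rw [hF, hz]
    _ = (x, y) := by simp [← ofAdd_zsmul]

theorem ofFreeProdInt_comp_toFreeProdInt :
    (ofFreeProdInt m).comp (toFreeProdInt m) = .id _ := by
  refine PresentedGroup.ext fun i => ?_
  rw [MonoidHom.comp_apply, toFreeProdInt, PresentedGroup.toGroup.of, MonoidHom.id_apply]
  induction i using Fin.lastCases with
  | last => simp [genImage, ofFreeProdInt_apply, cycGCentral_succ, map_list_prod, Function.comp_def]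
  | cast i => simp [genImage, ofFreeProdInt_apply]

end Isomorphism

/-- the group `G_n` presented by generators `a_1, …, a_n` and relations
`a_1 ⋯ a_n = a_{σ(1)} ⋯ a_{σ(n)}` for `σ` in the cyclic subgroup generated by the `n`-cycle
is isomorphic to `F × ℤ` with `F` free of rank `n - 1`. -/
theorem Gn_iso (n : ℕ) (hn : 3 ≤ n) :
    Nonempty (PresentedGroup (cycGRels n) ≃* FreeGroup (Fin (n - 1)) × Multiplicative ℤ) := by
  obtain ⟨m, rfl⟩ : ∃ m, n = m + 1 := ⟨n - 1, by omega⟩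
  exact ⟨(toFreeProdInt m).toMulEquiv (ofFreeProdInt m) (ofFreeProdInt_comp_toFreeProdInt m)
    (toFreeProdInt_comp_ofFreeProdInt m)⟩
end

section
/- Let K be a field, n ≥ 3, and let S_n be the monoid presented by generators a_1, …, a_n and relations a_1 a_2 ⋯ a_n = a_{σ(1)} ⋯ a_{σ(n)} for σ in the cyclic group generated by the n-cycle. Let P = (a_1 ⋯ a_n)·S_n ⊆ S_n. If Q is a prime ideal of the monoid algebra K[S_n] such that Q contains at least one element of S_n (viewed as basis elements of K[S_n]), then P ⊆ Q, i.e. every element of P lies in Q. -/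
/-! The element `z = a_1 ⋯ a_n` is central and each generator divides it on both sides:
`a_i · (a_{i+1} ⋯ a_n a_1 ⋯ a_{i-1}) = z = (a_{i+1} ⋯ a_n a_1 ⋯ a_{i-1}) · a_i`.
If `w a_i ∈ Q`, then `w z ∈ Q`, so `z r w = r w z ∈ Q` for all `r` and primality gives
`z ∈ Q` or `w ∈ Q`. Peeling off the generators of an element of `S_n ∩ Q` one at a time, and
using `1 ∉ Q`, this forces `z ∈ Q`, hence `z S_n ⊆ Q`. -/

theorem List.finRange_map_finRotate (n : ℕ) :
    (List.finRange n).map (finRotate n) = (List.finRange n).rotate 1 := by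
  apply List.ext_getElem (by simp)
  intro i _ _
  ext
  simp [finRotate_apply, Fin.val_add, List.getElem_rotate]

theorem List.finRange_map_finRotate_pow (n k : ℕ) :
    (List.finRange n).map ⇑(finRotate n ^ k) = (List.finRange n).rotate k := by
  induction k with
  | zero => simp
  | succ k ih =>
    rw [pow_succ, Equiv.Perm.coe_mul, ← List.map_map, List.finRange_map_finRotate, List.map_rotate,
      ih, List.rotate_rotate]

theorem List.exists_rotate_finRange_eq_cons {n : ℕ} (i : Fin n) :
    ∃ t : List (Fin n), (List.finRange n).rotate i = i :: t ∧
      (List.finRange n).rotate (i + 1) = t ++ [i] := by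
  obtain ⟨a, t, hat⟩ : ∃ a t, (List.finRange n).rotate i = a :: t :=
    List.exists_cons_of_ne_nil (by simpa using i.pos.ne')
  have ha : a = i := by
    have h0 := congrArg (·[0]?) hat
    simp only [List.getElem?_cons_zero] at h0
    rw [List.getElem?_rotate (by simp [i.pos])] at h0
    simpa [Nat.mod_eq_of_lt i.isLt] using h0.symm
  subst ha
  exact ⟨t, hat, by rw [← List.rotate_rotate, hat, List.rotate_cons_succ, List.rotate_zero]⟩

theorem mk'_permWord (n : ℕ) (σ : Equiv.Perm (Fin n)) :
    (conGen (cycRel n)).mk' (permWord n σ) = (((List.finRange n).map σ).map agen).prod := by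
  rw [permWord, map_list_prod, List.map_map, List.map_map]
  rfl

theorem zc_eq_prod_rotate (n k : ℕ) :
    zc n = (((List.finRange n).rotate k).map agen).prod := by
  have hz : zc n = (conGen (cycRel n)).mk' (permWord n 1) := by
    rw [mk'_permWord]; simp [zc]
  have hrel : (conGen (cycRel n)).mk' (permWord n 1) =
      (conGen (cycRel n)).mk' (permWord n (finRotate n ^ k)) :=
    (Con.eq _).2 (ConGen.Rel.of _ _ ⟨rfl, k, rfl⟩)
  rw [hz, hrel, mk'_permWord, List.finRange_map_finRotate_pow]

theorem exists_agen_mul_eq_zc {n : ℕ} (i : Fin n) :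
    ∃ u, agen i * u = zc n ∧ u * agen i = zc n := by
  obtain ⟨t, hi, hi'⟩ := List.exists_rotate_finRange_eq_cons i
  refine ⟨(t.map agen).prod, ?_, ?_⟩
  · rw [zc_eq_prod_rotate n i, hi, List.map_cons, List.prod_cons]
  · rw [zc_eq_prod_rotate n (i + 1), hi', List.map_append, List.prod_append, List.map_singleton,
      List.prod_singleton]

theorem closure_range_agen (n : ℕ) : Submonoid.closure (Set.range (agen (n := n))) = ⊤ :=
  PresentedMonoid.closure_range_of (cycRel n)

theorem commute_of_mul_eq_of_closure_eq_top {M : Type*} [Monoid M] {S : Set M} {z : M}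
    (hS : Submonoid.closure S = ⊤) (hz : ∀ a ∈ S, ∃ u, a * u = z ∧ u * a = z) (m : M) :
    Commute z m := by
  induction m using Submonoid.induction_of_closure_eq_top_right hS with
  | one => exact Commute.one_right z
  | mul_right x a ha ih =>
    obtain ⟨u, hau, hua⟩ := hz a ha
    refine ih.mul_right ?_
    calc z * a = a * (u * a) := by rw [← mul_assoc, hau]
      _ = a * z := by rw [hua]

theorem Ideal.mem_or_mem_of_mul_mem_of_forall_commute {R : Type*} [Semiring R] {Q : Ideal R}
    (hprime : ∀ a b : R, (∀ r, a * r * b ∈ Q) → a ∈ Q ∨ b ∈ Q) {c y : R}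
    (hc : ∀ r, Commute c r) (h : y * c ∈ Q) : c ∈ Q ∨ y ∈ Q :=
  hprime c y fun r => by
    rw [(hc r).eq, mul_assoc, (hc y).eq]
    exact Q.mul_mem_left r h

theorem MonoidAlgebra.of_mem_of_closure_eq_top {k M : Type*} [Semiring k] [Monoid M]
    {S : Set M} {z : M} (hS : Submonoid.closure S = ⊤) (hz : ∀ m, Commute z m)
    (hdvd : ∀ a ∈ S, ∃ u, a * u = z) {Q : Ideal (MonoidAlgebra k M)}
    (hright : ∀ x ∈ Q, ∀ r, x * r ∈ Q) (hproper : Q ≠ ⊤)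
    (hprime : ∀ a b : MonoidAlgebra k M, (∀ r, a * r * b ∈ Q) → a ∈ Q ∨ b ∈ Q)
    {m : M} (hm : of k M m ∈ Q) : of k M z ∈ Q := by
  have hcentral (r : MonoidAlgebra k M) : Commute (of k M z) r :=
    single_commute hz Commute.one_left r
  induction m using Submonoid.induction_of_closure_eq_top_right hS with
  | one => exact absurd ((Ideal.eq_top_iff_one Q).2 (by rwa [map_one] at hm)) hproper
  | mul_right x a ha ih =>
    obtain ⟨u, hau⟩ := hdvd a ha
    have hxz : of k M x * of k M z ∈ Q := by
      simpa [← map_mul, mul_assoc, hau] using hright _ hm (of k M u)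
    exact (Ideal.mem_or_mem_of_mul_mem_of_forall_commute hprime hcentral hxz).elim id ih

theorem primes_meeting_S_contain_P_general (K : Type*) [Field K] (n : ℕ)
    (Q : Ideal (MonoidAlgebra K (Scyc n)))
    (hright : ∀ x ∈ Q, ∀ r : MonoidAlgebra K (Scyc n), x * r ∈ Q)
    (hproper : Q ≠ ⊤)
    (hprime : ∀ a b : MonoidAlgebra K (Scyc n), (∀ r, a * r * b ∈ Q) → a ∈ Q ∨ b ∈ Q)
    (hmeets : ∃ s : Scyc n, MonoidAlgebra.of K (Scyc n) s ∈ Q) :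
    ∀ p : Scyc n, (∃ s, p = zc n * s) → MonoidAlgebra.of K (Scyc n) p ∈ Q := by
  have hdvd : ∀ a ∈ Set.range agen, ∃ u, a * u = zc n ∧ u * a = zc n := by
    rintro _ ⟨i, rfl⟩
    exact exists_agen_mul_eq_zc i
  have hcentral := commute_of_mul_eq_of_closure_eq_top (closure_range_agen n) hdvd
  obtain ⟨s₀, hs₀⟩ := hmeets
  have hz := MonoidAlgebra.of_mem_of_closure_eq_top (closure_range_agen n) hcentral
    (fun a ha => (hdvd a ha).imp fun _ => And.left) hright hproper hprime hs₀
  rintro p ⟨s, rfl⟩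
  rw [map_mul]
  exact hright _ hz _

/-- every prime (two-sided) ideal `Q` of `K[S_n]` that contains an element
of `S_n` contains `P = (a_1 ⋯ a_n) S_n`.  Here `Q` is a left ideal that is also closed
under right multiplication (i.e. a two-sided ideal), it is proper, and primality is
expressed elementwise (equivalently: `A·B ⊆ Q` implies `A ⊆ Q` or `B ⊆ Q` for two-sided
ideals `A`, `B`). -/
theorem primes_meeting_S_contain_P (K : Type*) [Field K] (n : ℕ) (hn : 3 ≤ n)
    (Q : Ideal (MonoidAlgebra K (Scyc n)))
    (hright : ∀ x ∈ Q, ∀ r : MonoidAlgebra K (Scyc n), x * r ∈ Q)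
    (hproper : Q ≠ ⊤)
    (hprime : ∀ a b : MonoidAlgebra K (Scyc n), (∀ r, a * r * b ∈ Q) → a ∈ Q ∨ b ∈ Q)
    (hmeets : ∃ s : Scyc n, MonoidAlgebra.of K (Scyc n) s ∈ Q) :
    ∀ p : Scyc n, (∃ s, p = zc n * s) → MonoidAlgebra.of K (Scyc n) p ∈ Q :=
  primes_meeting_S_contain_P_general K n Q hright hproper hprime hmeets
end

section
/- Let n ≥ 3 and let M = S_n(Sym_n) be the monoid presented by generators a_1, …, a_n and relations a_1 a_2 ⋯ a_n = a_{σ(1)} a_{σ(2)} ⋯ a_{σ(n)} for all σ ∈ Sym_n. Then z = a_1 a_2 ⋯ a_n is central in M, and z·M is a prime ideal of the monoid M: for all a, b ∈ M \ zM there exists s ∈ M such that a·s·b ∉ zM. -/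
/-- The defining relations `a_1 a_2 ⋯ a_n = a_{σ(1)} a_{σ(2)} ⋯ a_{σ(n)}` for all
permutations `σ ∈ Sym_n`. -/
def symRel (n : ℕ) : FreeMonoid (Fin n) → FreeMonoid (Fin n) → Prop :=
  fun x y => x = permWord n 1 ∧ ∃ σ : Equiv.Perm (Fin n), y = permWord n σ

/-- The monoid `M = S_n(Sym_n)` presented by generators `a_1, …, a_n` and the above relations. -/
def Msym (n : ℕ) : Type := (conGen (symRel n)).Quotient

instance (n : ℕ) : Monoid (Msym n) := Con.monoid _

/-- The generator `a_i` of `M`. -/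
def mgen {n : ℕ} (i : Fin n) : Msym n := (conGen (symRel n)).mk' (FreeMonoid.of i)

/-- The element `z = a_1 a_2 ⋯ a_n` of `M`. -/
def zs (n : ℕ) : Msym n := ((List.finRange n).map mgen).prod

section Rees

variable {M : Type*} [Monoid M] (I : Set M)

def reesCon (hI : ∀ a ∈ I, ∀ x, x * a ∈ I ∧ a * x ∈ I) : Con M where
  r a b := a = b ∨ a ∈ I ∧ b ∈ I
  iseqv :=
    { refl _ := .inl rfl
      symm := fun h => h.imp Eq.symm And.symm
      trans := by
        rintro a b c (rfl | ⟨ha, hb⟩) hbc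
        · exact hbc
        · rcases hbc with rfl | ⟨-, hc⟩
          exacts [.inr ⟨ha, hb⟩, .inr ⟨ha, hc⟩] }
  mul' := by
    rintro a b c d (rfl | ⟨ha, hb⟩) hcd
    · rcases hcd with rfl | ⟨hc, hd⟩
      exacts [.inl rfl, .inr ⟨(hI c hc a).1, (hI d hd a).1⟩]
    · exact .inr ⟨(hI a ha c).2, (hI b hb d).2⟩

variable {I}

theorem eq_of_conGen_of_notMem (hI : ∀ a ∈ I, ∀ x, x * a ∈ I ∧ a * x ∈ I)
    {r : M → M → Prop} (hr : ∀ a b, r a b → a ∈ I ∧ b ∈ I) {a b : M} (ha : a ∉ I)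
    (h : conGen r a b) : a = b :=
  ((Con.conGen_le (c := reesCon I hI)).2 (fun a b hab => Or.inr (hr a b hab)) h).resolve_right
    fun h => ha h.1

end Rees

namespace List

variable {α : Type*} {p l₁ l₂ u v : List α} {x y : α}

theorem Nodup.infix_or_infix_of_getLast_eq_head (hp : p.Nodup) (h : p <:+: l₁ ++ l₂)
    (hc : ∀ h₁ h₂, l₁.getLast h₁ = l₂.head h₂) : p <:+: l₁ ∨ p <:+: l₂ := by
  obtain h | h | ⟨q₁, q₂, hq₁, hq₂, rfl, hs, hpf⟩ := infix_append_iff_ne_nil.1 h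
  · exact .inl h
  · exact .inr h
  · have hlast : q₁.getLast hq₁ = q₂.head hq₂ := by rw [hs.getLast hq₁, hpf.head hq₂, hc]
    exact (disjoint_of_nodup_append hp (getLast_mem hq₁) (hlast ▸ head_mem hq₂)).elim

theorem Nodup.infix_or_infix_of_infix_append_cons_cons (hp : p.Nodup) (hlen : 2 < p.length)
    (hx : ∀ h, u.getLast h = x) (hy : ∀ h, v.head h = y) (h : p <:+: u ++ x :: y :: v) :
    p <:+: u ∨ p <:+: v := by
  refine (hp.infix_or_infix_of_getLast_eq_head h fun h₁ _ => hx h₁).imp_right fun h => ?_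
  refine (hp.infix_or_infix_of_getLast_eq_head (l₁ := [x, y]) h
    fun _ h₂ => (hy h₂).symm).resolve_left fun h => ?_
  have := h.length_le
  simp only [length_cons, length_nil] at this
  omega

end List

namespace Msym

open FreeMonoid List

variable {n : ℕ}

def mk (n : ℕ) : FreeMonoid (Fin n) →* Msym n := (conGen (symRel n)).mk'

theorem mk_surjective : Function.Surjective (mk n) := Con.mk'_surjective

theorem toList_permWord (σ : Equiv.Perm (Fin n)) :
    (permWord n σ).toList = (finRange n).map σ := by
  rw [permWord, toList_prod, List.map_map, map_eq_flatMap (f := σ), flatMap_def]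
  rfl

theorem zs_eq_mk_permWord (σ : Equiv.Perm (Fin n)) : zs n = mk n (permWord n σ) := by
  have hz : zs n = mk n (permWord n 1) := by
    simp only [zs, permWord, map_list_prod, List.map_map]
    rfl
  exact hz.trans <| (Con.eq _).2 <| ConGen.Rel.of _ _ ⟨rfl, σ, rfl⟩

theorem exists_perm_map_finRange_eq {l : List (Fin n)} (h : l ~ finRange n) :
    ∃ σ : Equiv.Perm (Fin n), (finRange n).map σ = l := by
  have hlen : l.length = n := by simpa using h.length_eq
  refine ⟨(finCongr hlen.symm).trans <| (h.nodup_iff.2 (nodup_finRange n)).getEquivOfForallMemList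
    l fun i => h.mem_iff.2 (mem_finRange i), ?_⟩
  apply ext_get <;> simp [hlen]

theorem mk_ofList_of_perm {l : List (Fin n)} (h : l ~ finRange n) : mk n (ofList l) = zs n := by
  obtain ⟨σ, rfl⟩ := exists_perm_map_finRange_eq h
  rw [zs_eq_mk_permWord σ, ← toList_permWord, ofList_toList]

theorem commute_zs_mgen (i : Fin n) : Commute (zs n) (mgen i) := by
  have hl : i :: (finRange n).erase i ~ finRange n := (perm_cons_erase (mem_finRange i)).symm
  have hz : zs n = mgen i * mk n (ofList ((finRange n).erase i)) := by
    rw [← mk_ofList_of_perm hl, ofList_cons, map_mul]; rfl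
  have hz' : zs n = mk n (ofList ((finRange n).erase i)) * mgen i := by
    rw [← mk_ofList_of_perm ((perm_append_singleton _ _).trans hl), ofList_append, map_mul]; rfl
  calc zs n * mgen i = mgen i * mk n (ofList ((finRange n).erase i)) * mgen i := by rw [← hz]
    _ = mgen i * zs n := by rw [mul_assoc, ← hz']

theorem commute_zs (s : Msym n) : Commute (zs n) s := by
  obtain ⟨w, rfl⟩ := mk_surjective s
  induction w using FreeMonoid.inductionOn' with
  | one => simp
  | of_mul i w ih => rw [map_mul]; exact (commute_zs_mgen i).mul_right ih

def HasPermFactor (w : FreeMonoid (Fin n)) : Prop :=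
  ∃ p, p <:+: w.toList ∧ p ~ finRange n

theorem HasPermFactor.mul_left {w : FreeMonoid (Fin n)} (h : HasPermFactor w)
    (x : FreeMonoid (Fin n)) : HasPermFactor (x * w) :=
  let ⟨p, hp, hperm⟩ := h
  ⟨p, by simpa using hp.trans (infix_append_right (l₁ := x.toList)), hperm⟩

theorem HasPermFactor.mul_right {w : FreeMonoid (Fin n)} (h : HasPermFactor w)
    (x : FreeMonoid (Fin n)) : HasPermFactor (w * x) :=
  let ⟨p, hp, hperm⟩ := h
  ⟨p, by simpa using hp.trans (infix_append_left (l₂ := x.toList)), hperm⟩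

theorem hasPermFactor_permWord (σ : Equiv.Perm (Fin n)) : HasPermFactor (permWord n σ) :=
  ⟨_, infix_rfl, by rw [toList_permWord]; exact σ.map_finRange_perm⟩

theorem eq_of_mk_eq_mk {w v : FreeMonoid (Fin n)} (hw : ¬HasPermFactor w)
    (h : mk n w = mk n v) : w = v :=
  eq_of_conGen_of_notMem (I := {w | HasPermFactor w}) (fun _ h x => ⟨h.mul_left x, h.mul_right x⟩)
    (fun _ _ ⟨ha, σ, hb⟩ => ⟨ha ▸ hasPermFactor_permWord 1, hb ▸ hasPermFactor_permWord σ⟩)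
    hw ((Con.eq _).1 h)

theorem exists_mk_eq_zs_mul_iff {w : FreeMonoid (Fin n)} :
    (∃ m, mk n w = zs n * m) ↔ HasPermFactor w := by
  constructor
  · rintro ⟨m, hm⟩
    obtain ⟨m, rfl⟩ := mk_surjective m
    by_contra hw
    rw [zs_eq_mk_permWord 1, ← map_mul] at hm
    exact hw (eq_of_mk_eq_mk hw hm ▸ (hasPermFactor_permWord 1).mul_right m)
  · rintro ⟨p, ⟨s, t, hst⟩, hp⟩
    refine ⟨mk n (ofList s) * mk n (ofList t), ?_⟩
    rw [← ofList_toList w, ← hst, ofList_append, ofList_append, map_mul, map_mul,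
      mk_ofList_of_perm hp, ← (commute_zs _).eq, mul_assoc]

theorem exists_not_hasPermFactor_mul (hn : 3 ≤ n) {u v : FreeMonoid (Fin n)}
    (hu : ¬HasPermFactor u) (hv : ¬HasPermFactor v) :
    ∃ s, ¬HasPermFactor (u * s * v) := by
  let d : Fin n := ⟨0, by omega⟩
  let x := u.toList.getLast?.getD d
  let y := v.toList.head?.getD d
  refine ⟨of x * of y, ?_⟩
  rintro ⟨p, hp, hperm⟩
  have hnodup : p.Nodup := hperm.nodup_iff.2 (nodup_finRange n)
  have hlen : 2 < p.length := by rw [hperm.length_eq, length_finRange]; omega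
  refine (hnodup.infix_or_infix_of_infix_append_cons_cons (x := x) (y := y) hlen ?_ ?_ ?_).elim
    (fun h => hu ⟨p, h, hperm⟩) (fun h => hv ⟨p, h, hperm⟩)
  · intro h
    simp [x, getLast?_eq_some_getLast h]
  · intro h
    simp [y, head?_eq_some_head h]
  · simpa using hp

end Msym

/-- in `M = S_n(Sym_n)`, the element `z = a_1 ⋯ a_n` is central and
`zM` is a prime (two-sided) ideal of the monoid `M`. -/
theorem zM_prime (n : ℕ) (hn : 3 ≤ n) :
    (∀ s : Msym n, zs n * s = s * zs n) ∧
    (∀ P : Set (Msym n), P = {x | ∃ m, x = zs n * m} →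
      (∀ p ∈ P, ∀ s : Msym n, s * p ∈ P ∧ p * s ∈ P) ∧
      (∀ a b : Msym n, a ∉ P → b ∉ P → ∃ s : Msym n, a * s * b ∉ P)) := by
  refine ⟨fun s => (Msym.commute_zs s).eq, fun P hP => ⟨?_, ?_⟩⟩ <;> subst hP
  · rintro _ ⟨m, rfl⟩ s
    exact ⟨⟨s * m, by rw [← mul_assoc, ← (Msym.commute_zs s).eq, mul_assoc]⟩, ⟨m * s, mul_assoc ..⟩⟩
  · intro a b ha hb
    obtain ⟨u, rfl⟩ := Msym.mk_surjective a
    obtain ⟨v, rfl⟩ := Msym.mk_surjective b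
    simp only [Set.mem_ofPred_eq, Msym.exists_mk_eq_zs_mul_iff] at ha hb
    obtain ⟨s, hs⟩ := Msym.exists_not_hasPermFactor_mul hn ha hb
    exact ⟨Msym.mk n s, by simpa [← map_mul, Msym.exists_mk_eq_zs_mul_iff] using hs⟩
end

section
/- Let n ≥ 3, let H_0 be the cyclic subgroup of Sym_n generated by the n-cycle (1,2,…,n), and let H be a subgroup of Sym_n containing H_0. Let G_n(H) be the group presented by generators a_1, …, a_n and relations a_1 a_2 ⋯ a_n = a_{τ(1)} a_{τ(2)} ⋯ a_{τ(n)} for all τ ∈ H. Then G_n(H) is isomorphic to F × ℤ, where F is the group presented by generators x_1, …, x_n and relations x_1 x_2 ⋯ x_n = 1 and x_{τ(1)} x_{τ(2)} ⋯ x_{τ(n)} = 1 for all τ ∈ H. -/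
open Equiv Multiplicative

theorem permGWord_eq_prod_ofFn (n : ℕ) (σ : Perm (Fin n)) :
    permGWord n σ = (List.ofFn fun i => FreeGroup.of (σ i)).prod := by
  rw [permGWord, List.ofFn_eq_map]

theorem lift_permGWord {n : ℕ} {A : Type*} [CommGroup A] (f : Fin n → A) (σ : Perm (Fin n)) :
    FreeGroup.lift f (permGWord n σ) = ∏ i, f i := by
  rw [permGWord_eq_prod_ofFn, map_list_prod, List.map_ofFn, List.prod_ofFn,
    ← Equiv.prod_comp σ f]
  simp

theorem permGWord_mul_finRotate {m : ℕ} (σ : Perm (Fin (m + 1))) :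
    permGWord (m + 1) (σ * finRotate (m + 1))
      = (FreeGroup.of (σ 0))⁻¹ * permGWord (m + 1) σ * FreeGroup.of (σ 0) := by
  have hrot (i : Fin m) : finRotate (m + 1) i.castSucc = i.succ := by
    rw [finRotate_apply, Fin.coeSucc_eq_succ]
  rw [permGWord_eq_prod_ofFn, permGWord_eq_prod_ofFn, List.ofFn_succ', List.ofFn_succ]
  simp [hrot]

theorem finRotate_pow_apply_zero {m : ℕ} (i : Fin (m + 1)) :
    (finRotate (m + 1) ^ (i : ℕ)) 0 = i := by
  rw [Perm.coe_pow, ← finCycle_eq_finRotate_iterate, finCycle_apply, zero_add]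

section CentralSplitting

variable {G F : Type*} [Group G] [Group F] {z : G}

def untwist (hz : ∀ g, Commute z g) (χ : G →* Multiplicative ℤ) : G →* G where
  toFun g := g * z ^ (-(χ g).toAdd)
  map_one' := by simp
  map_mul' g h := by
    simp only [map_mul, toAdd_mul, neg_add, zpow_add, mul_assoc]
    rw [← mul_assoc h, ← mul_assoc _ h, ((hz h).zpow_left _).eq]

variable (hz : ∀ g, Commute z g) {χ : G →* Multiplicative ℤ}

theorem untwist_apply (g : G) : untwist hz χ g = g * z ^ (-(χ g).toAdd) := rfl

theorem map_untwist_eq_one (hχ : χ z = ofAdd 1) (g : G) : χ (untwist hz χ g) = 1 := by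
  rw [untwist_apply, map_mul, map_zpow, hχ, ← ofAdd_zsmul, smul_eq_mul, mul_one, ofAdd_neg,
    ofAdd_toAdd, mul_inv_cancel]

theorem untwist_self (hχ : χ z = ofAdd 1) : untwist hz χ z = 1 := by
  rw [untwist_apply, hχ, toAdd_ofAdd, zpow_neg_one, mul_inv_cancel]

def mulEquivProdOfCentral (hχ : χ z = ofAdd 1) (π : G →* F) (s : F →* G)
    (hsπ : s.comp π = untwist hz χ) (hπs : π.comp s = MonoidHom.id F) :
    G ≃* F × Multiplicative ℤ :=
  have hsπ' (g : G) : s (π g) = untwist hz χ g := DFunLike.congr_fun hsπ g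
  have hπs' (x : F) : π (s x) = x := DFunLike.congr_fun hπs x
  have hπz : π z = 1 := by
    rw [← hπs' (π z), hsπ', untwist_apply, hχ]
    simp
  have hχs (x : F) : χ (s x) = 1 := by rw [← hπs' x, hsπ', map_untwist_eq_one hz hχ]
  MonoidHom.toMulEquiv (π.prod χ)
    (s.noncommCoprod (zpowersHom G z) fun x k => by
      rw [zpowersHom_apply]
      exact ((hz (s x)).zpow_left k.toAdd).symm)
    (MonoidHom.ext fun g => by
      simp [hsπ', untwist_apply])
    (MonoidHom.ext fun ⟨x, k⟩ => by
      simp only [MonoidHom.comp_apply, MonoidHom.prod_apply, MonoidHom.noncommCoprod_apply,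
        zpowersHom_apply]
      simp [hπs', hπz, hχs, hχ, ← ofAdd_zsmul])

end CentralSplitting

def gnHRels (n : ℕ) (H : Subgroup (Perm (Fin n))) : Set (FreeGroup (Fin n)) :=
  {w | ∃ τ ∈ H, w = permGWord n 1 * (permGWord n τ)⁻¹}

def fnHRels (n : ℕ) (H : Subgroup (Perm (Fin n))) : Set (FreeGroup (Fin n)) :=
  {permGWord n 1} ∪ {w | ∃ τ ∈ H, w = permGWord n τ}

namespace GnH

open PresentedGroup

variable {m : ℕ} {H : Subgroup (Perm (Fin (m + 1)))}

variable (H) in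
def prodGens : PresentedGroup (gnHRels (m + 1) H) := mk _ (permGWord (m + 1) 1)

theorem mk_permGWord_of_mem {τ : Perm (Fin (m + 1))} (hτ : τ ∈ H) :
    mk (gnHRels (m + 1) H) (permGWord (m + 1) τ) = prodGens H :=
  Eq.symm <| mk_eq_mk_of_mul_inv_mem ⟨τ, hτ, rfl⟩

theorem commute_prodGens_of_mem {σ : Perm (Fin (m + 1))} (hσ : σ ∈ H)
    (hσr : σ * finRotate (m + 1) ∈ H) : Commute (prodGens H) (of (σ 0)) := by
  have h := mk_permGWord_of_mem hσr
  rw [permGWord_mul_finRotate, map_mul, map_mul, map_inv, mk_permGWord_of_mem hσ, mul_assoc] at h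
  exact (eq_inv_mul_iff_mul_eq.mp h.symm).symm

theorem commute_prodGens (hH : Subgroup.zpowers (finRotate (m + 1)) ≤ H)
    (g : PresentedGroup (gnHRels (m + 1) H)) : Commute (prodGens H) g := by
  have hrot : finRotate (m + 1) ∈ H := hH (Subgroup.mem_zpowers _)
  suffices ∀ i, of i ∈ Subgroup.centralizer {prodGens H} from
    (Subgroup.mem_centralizer_singleton_iff.mp (generated_by _ _ this g)).symm
  intro i
  have hpow : finRotate (m + 1) ^ (i : ℕ) ∈ H := H.pow_mem hrot _
  have h := commute_prodGens_of_mem hpow (H.mul_mem hpow hrot)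
  rw [finRotate_pow_apply_zero] at h
  exact Subgroup.mem_centralizer_singleton_iff.mpr h.eq.symm

variable (H) in
def expSumFirst : PresentedGroup (gnHRels (m + 1) H) →* Multiplicative ℤ :=
  toGroup (f := Pi.mulSingle 0 (ofAdd 1)) <| by
    rintro _ ⟨τ, -, rfl⟩
    simp [lift_permGWord]

theorem expSumFirst_prodGens : expSumFirst H (prodGens H) = ofAdd 1 :=
  (lift_permGWord _ 1).trans (by simp)

variable (H) in
def toF : PresentedGroup (gnHRels (m + 1) H) →* PresentedGroup (fnHRels (m + 1) H) :=
  QuotientGroup.map _ _ (MonoidHom.id _) <| by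
    rw [Subgroup.comap_id]
    refine Subgroup.normalClosure_le_normal ?_
    rintro _ ⟨τ, hτ, rfl⟩
    exact mul_mem (Subgroup.subset_normalClosure (.inl rfl))
      (inv_mem (Subgroup.subset_normalClosure (.inr ⟨τ, hτ, rfl⟩)))

theorem toF_prodGens : toF H (prodGens H) = 1 := one_of_mem (.inl rfl)

def ofF (hH : Subgroup.zpowers (finRotate (m + 1)) ≤ H) :
    PresentedGroup (fnHRels (m + 1) H) →* PresentedGroup (gnHRels (m + 1) H) :=
  QuotientGroup.lift _ ((untwist (commute_prodGens hH) (expSumFirst H)).comp (mk _)) <| by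
    refine Subgroup.normalClosure_le_normal ?_
    rintro _ (rfl | ⟨τ, hτ, rfl⟩) <;> rw [SetLike.mem_coe, MonoidHom.mem_ker, MonoidHom.comp_apply]
    · exact untwist_self _ expSumFirst_prodGens
    · rw [mk_permGWord_of_mem hτ, untwist_self _ expSumFirst_prodGens]

theorem ofF_comp_toF (hH : Subgroup.zpowers (finRotate (m + 1)) ≤ H) :
    (ofF hH).comp (toF H) = untwist (commute_prodGens hH) (expSumFirst H) :=
  PresentedGroup.ext fun _ => rfl

theorem toF_comp_ofF (hH : Subgroup.zpowers (finRotate (m + 1)) ≤ H) :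
    (toF H).comp (ofF hH) = MonoidHom.id _ :=
  PresentedGroup.ext fun i => by
    change toF H (untwist (commute_prodGens hH) (expSumFirst H) (of i)) = of i
    rw [untwist_apply, map_mul, map_zpow, toF_prodGens, one_zpow, mul_one]
    rfl

end GnH

/-- for a subgroup `H` of `Sym_n` containing the cyclic subgroup `H₀`
generated by the `n`-cycle `(1,2,…,n)` (i.e. `finRotate n`), the group `G_n(H)` presented
by `a_1, …, a_n` with relations `a_1 ⋯ a_n = a_{τ(1)} ⋯ a_{τ(n)}` for all `τ ∈ H` is
isomorphic to `F × ℤ`, where `F` is the group presented by `x_1, …, x_n` with relations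
`x_1 ⋯ x_n = 1` and `x_{τ(1)} ⋯ x_{τ(n)} = 1` for all `τ ∈ H`. -/
theorem GnH_iso (n : ℕ) (hn : 3 ≤ n) (H : Subgroup (Equiv.Perm (Fin n)))
    (hH : Subgroup.zpowers (finRotate n) ≤ H) :
    Nonempty
      (PresentedGroup {w : FreeGroup (Fin n) | ∃ τ ∈ H, w = permGWord n 1 * (permGWord n τ)⁻¹} ≃*
        PresentedGroup ({permGWord n 1} ∪ {w : FreeGroup (Fin n) | ∃ τ ∈ H, w = permGWord n τ}) ×
          Multiplicative ℤ) := by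
  obtain ⟨m, rfl⟩ : ∃ m, n = m + 1 := ⟨n - 1, by omega⟩
  exact ⟨mulEquivProdOfCentral (GnH.commute_prodGens hH) GnH.expSumFirst_prodGens (GnH.toF H)
    (GnH.ofF hH) (GnH.ofF_comp_toF hH) (GnH.toF_comp_ofF hH)⟩
end
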